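/- arXiv:1108.2076 — 5 statements merged into one kernel-verified Lean document; each statement's English description precedes it below -/
import Mathlib

section
/- The image of the map Φ(ζ) = (exp ζ, exp(iζ)) is closed in (ℂ*)²: if a point (z,w) ∈ ℂ² with z ≠ 0 and w ≠ 0 lies in the topological closure of the set S = {(exp ζ, exp(iζ)) : ζ ∈ ℂ}, then (z,w) ∈ S. Hence Φ maps ℂ biholomorphically onto a closed analytic subset of (ℂ*)². -/
/-! Since `‖exp ζ‖ = e^{Re ζ}` and `‖exp (iζ)‖ = e^{-Im ζ}`, the map
`g (z, w) = log ‖z‖ - i log ‖w‖` is a left inverse of `Φ` that is continuous on `(ℂ*)²`.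
A continuous map with a left inverse continuous at `p` contains `p` in its range as soon as
`p` lies in the closure of the range: `Φ ∘ g` is the identity on the range, hence at `p`. -/
open Function Set Filter Topology

theorem Function.LeftInverse.mem_range_of_mem_closure {X Y : Type*} [TopologicalSpace X]
    [TopologicalSpace Y] [T2Space Y] {f : X → Y} {g : Y → X} (hgf : LeftInverse g f)
    (hf : Continuous f) {p : Y} (hg : ContinuousAt g p) (hp : p ∈ closure (range f)) :
    p ∈ range f := by
  have : (𝓝[range f] p).NeBot := mem_closure_iff_nhdsWithin_neBot.mp hp
  have hfg : Tendsto (f ∘ g) (𝓝[range f] p) (𝓝 (f (g p))) :=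
    (hf.continuousAt.comp hg).tendsto.mono_left nhdsWithin_le_nhds
  have hid : f ∘ g =ᶠ[𝓝[range f] p] id :=
    eventually_nhdsWithin_of_forall fun _ ⟨x, hx⟩ => hx ▸ congrArg f (hgf x)
  exact ⟨g p, tendsto_nhds_unique hfg
    ((tendsto_nhdsWithin_of_tendsto_nhds tendsto_id).congr' hid.symm)⟩

namespace Complex

noncomputable def steinLog (p : ℂ × ℂ) : ℂ := Real.log ‖p.1‖ - I * Real.log ‖p.2‖

theorem steinLog_leftInverse :
    LeftInverse steinLog fun ζ : ℂ => (exp ζ, exp (I * ζ)) := fun ζ => by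
  simp [steinLog, norm_exp, Complex.ext_iff]

theorem continuousAt_steinLog {p : ℂ × ℂ} (h₁ : p.1 ≠ 0) (h₂ : p.2 ≠ 0) :
    ContinuousAt steinLog p := by
  unfold steinLog
  fun_prop (disch := simpa)

end Complex

/-- The image of Stein's curve `Φ(ζ) = (exp ζ, exp(iζ))` is closed in `(ℂ*)²`:
any point of `(ℂ*)²` lying in the closure of the image already lies in the image. -/
theorem stein_curve_image_closed (z w : ℂ) (hz : z ≠ 0) (hw : w ≠ 0)
    (h : (z, w) ∈ closure (Set.range (fun ζ : ℂ => (Complex.exp ζ, Complex.exp (Complex.I * ζ))))) :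
    (z, w) ∈ Set.range (fun ζ : ℂ => (Complex.exp ζ, Complex.exp (Complex.I * ζ))) :=
  Complex.steinLog_leftInverse.mem_range_of_mem_closure (by fun_prop)
    (Complex.continuousAt_steinLog hz hw) h
end

section
/- Let λ ∈ ℂ with Re λ ∉ 2πℤ. Then the divisors D⁺ and D⁺_λ are disjoint: there exist no ζ, ζ' ∈ ℂ such that exp ζ = exp ζ' and exp(iζ) = exp(λ + iζ'). Equivalently, the images of the maps ζ ↦ (e^ζ, e^{iζ}) and ζ' ↦ (e^{ζ'}, e^λ e^{iζ'}) in (ℂ*)² do not intersect. -/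
/-- If `Re λ ∉ 2πℤ`, the divisors `D⁺` and `D⁺_λ` are disjoint: there are no
`ζ, ζ'` with `exp ζ = exp ζ'` and `exp(iζ) = exp(λ + iζ')`. -/
theorem stein_translated_divisor_disjoint (lam : ℂ)
    (hlam : ∀ n : ℤ, lam.re ≠ 2 * Real.pi * n) :
    ¬ ∃ ζ ζ' : ℂ, Complex.exp ζ = Complex.exp ζ' ∧
      Complex.exp (Complex.I * ζ) = Complex.exp (lam + Complex.I * ζ') := by
  rintro ⟨ζ, ζ', h1, h2⟩
  rw [Complex.exp_eq_exp_iff_exists_int] at h1 h2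
  obtain ⟨k, hk⟩ := h1
  obtain ⟨m, hm⟩ := h2
  subst hk
  apply hlam (-k)
  have : lam = -(k : ℂ) * (2 * Real.pi) + (-m : ℂ) * (2 * Real.pi * Complex.I) := by
    have hI : Complex.I * Complex.I = -1 := Complex.I_mul_I
    linear_combination -hm + (k:ℂ) * (2*Real.pi) * hI
  rw [this]
  push_cast
  simp [Complex.add_re, Complex.mul_re, Complex.I_re, Complex.I_im]
  ring
end

section
/- For every ξ ∈ ℂ and w ∈ ℂ∖{0}, one has G(ξ,w) = 0 if and only if there exists k ∈ ℤ with w = exp(iξ + 2πk). That is, the zero set of Stein's function F⁺ in the variable ξ = log z is exactly the divisor D⁺ : w = e^{i log z}, counted over all branches of log z. -/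
/-!
Each factor of the two infinite products is `1 - c·e^{a - 2πn}` with `c, a` fixed, so the terms
are absolutely summable and each product vanishes exactly when one of its factors does. The
factors of the first product vanish at `w = e^{iξ + 2πν}`, `ν ≥ 0`, those of the second at
`w = e^{iξ - 2π(μ + 1)}`, `μ ≥ 0`; together these are the points `w = e^{iξ + 2πk}`, `k ∈ ℤ`.
-/

/-- Stein's function `F⁺(z,w)` written in the variable `ξ = log z`. -/
noncomputable def steinG (ξ w : ℂ) : ℂ :=
  Complex.exp (ξ ^ 2 / (4 * Real.pi) + ξ / (1 - Complex.I)) *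
    (∏' ν : ℕ, (1 - w * Complex.exp (-Complex.I * ξ - 2 * Real.pi * ν))) *
    (∏' μ : ℕ, (1 - w⁻¹ * Complex.exp (Complex.I * ξ - 2 * Real.pi * (μ + 1))))

open Complex

theorem Int.exists_iff_natCast_or_negSucc {p : ℤ → Prop} :
    (∃ k, p k) ↔ (∃ n : ℕ, p n) ∨ ∃ n : ℕ, p (Int.negSucc n) := by
  refine ⟨fun ⟨k, hk⟩ => ?_, fun h => h.elim (fun ⟨n, hn⟩ => ⟨_, hn⟩) fun ⟨n, hn⟩ => ⟨_, hn⟩⟩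
  cases k with
  | ofNat n => exact .inl ⟨n, hk⟩
  | negSucc n => exact .inr ⟨n, hk⟩

theorem tprod_one_sub_eq_zero_iff {ι R : Type*} [NormedCommRing R] [NormOneClass R]
    [CompleteSpace R] [NormMulClass R] {f : ι → R} (hf : Summable (‖f ·‖)) :
    ∏' i, (1 - f i) = 0 ↔ ∃ i, f i = 1 := by
  refine ⟨fun h => ?_, fun ⟨i, hi⟩ => tprod_of_exists_eq_zero ⟨i, by rw [hi, sub_self]⟩⟩
  by_contra! hne
  refine tprod_one_add_ne_zero_of_summable (f := (-f ·)) (fun i => ?_) (by simpa using hf) ?_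
  · rw [← sub_eq_add_neg, sub_ne_zero]
    exact (hne i).symm
  · simpa only [← sub_eq_add_neg] using h

theorem summable_norm_mul_exp_sub_mul_nat (c a : ℂ) {r : ℂ} (hr : 0 < r.re) :
    Summable fun n : ℕ => ‖c * exp (a - r * n)‖ := by
  have hq : Real.exp (-r.re) < 1 := Real.exp_lt_one_iff.mpr (neg_neg_of_pos hr)
  refine ((summable_geometric_of_lt_one (Real.exp_pos _).le hq).mul_left
    (‖c‖ * Real.exp a.re)).congr fun n => ?_
  rw [norm_mul, norm_exp, ← Real.exp_nat_mul, mul_assoc, ← Real.exp_add]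
  simp only [sub_re, mul_re, natCast_re, natCast_im, mul_zero, sub_zero]
  ring_nf

theorem mul_exp_neg_eq_one_iff (w a : ℂ) : w * exp (-a) = 1 ↔ w = exp a := by
  rw [mul_eq_one_iff_eq_inv₀ (exp_ne_zero _), exp_neg, inv_inv]

theorem inv_mul_exp_eq_one_iff {w : ℂ} (hw : w ≠ 0) (a : ℂ) : w⁻¹ * exp a = 1 ↔ w = exp a := by
  rw [inv_mul_eq_one₀ hw, eq_comm]

/-- The zero set of Stein's function `G(ξ,w)` is exactly the divisor
`D⁺ : w = e^{iξ + 2πk}`, over all branches of `log z`. -/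
theorem steinG_zero_iff (ξ w : ℂ) (hw : w ≠ 0) :
    steinG ξ w = 0 ↔ ∃ k : ℤ, w = Complex.exp (Complex.I * ξ + 2 * Real.pi * k) := by
  have hpi : 0 < (2 * (Real.pi : ℂ)).re := by simp [Real.pi_pos]
  have hA (ν : ℕ) : w * exp (-I * ξ - 2 * Real.pi * ν) = 1 ↔
      w = exp (I * ξ + 2 * Real.pi * ((ν : ℤ) : ℂ)) := by
    rw [← mul_exp_neg_eq_one_iff]
    push_cast
    ring_nf
  have hB (μ : ℕ) : w⁻¹ * exp (I * ξ - 2 * Real.pi * (μ + 1)) = 1 ↔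
      w = exp (I * ξ + 2 * Real.pi * ((Int.negSucc μ : ℤ) : ℂ)) := by
    rw [inv_mul_exp_eq_one_iff hw, Int.cast_negSucc]
    push_cast
    ring_nf
  have hsA := summable_norm_mul_exp_sub_mul_nat w (-I * ξ) hpi
  have hsB := summable_norm_mul_exp_sub_mul_nat w⁻¹ (I * ξ - 2 * Real.pi) hpi
  rw [steinG, mul_eq_zero, mul_eq_zero, or_iff_right (exp_ne_zero _),
    tprod_one_sub_eq_zero_iff hsA,
    tprod_one_sub_eq_zero_iff (by simpa only [mul_add, mul_one, sub_sub, add_comm] using hsB),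
    Int.exists_iff_natCast_or_negSucc]
  simp only [hA, hB]
end

section
/- For every ζ ∈ ℂ and w ∈ ℂ∖{0}: G(ζ,w) = 0 if and only if there exists ζ' ∈ ℂ with exp ζ' = exp ζ and w = exp(iζ'). In other words, the zero locus of Stein's function F⁺ on (ℂ*)², parametrized by z = e^ζ, coincides with the image of the curve Φ(ζ) = (e^ζ, e^{iζ}), i.e. with the divisor D⁺. -/
open Complex
open scoped Real

theorem tprod_one_sub_eq_zero_iff_of_summable_norm {ι R : Type*} [NormedCommRing R]
    [NormOneClass R] [CompleteSpace R] [NormMulClass R] {f : ι → R} (hf : Summable (‖f ·‖)) :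
    ∏' i, (1 - f i) = 0 ↔ ∃ i, 1 - f i = 0 := by
  refine ⟨fun h => ?_, tprod_of_exists_eq_zero⟩
  by_contra! hne
  simp only [sub_eq_add_neg] at h hne
  exact tprod_one_add_ne_zero_of_summable hne (by simpa using hf) h

theorem summable_norm_mul_exp_sub_two_pi_mul (c a : ℂ) :
    Summable fun n : ℕ => ‖c * exp (a - 2 * π * n)‖ := by
  have hq : ‖exp (-(2 * π))‖ < 1 := by
    rw [norm_exp, Real.exp_lt_one_iff]
    simp [Real.pi_pos]
  refine ((summable_geometric_of_lt_one (norm_nonneg _) hq).mul_left ‖c * exp a‖).congr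
    fun n => ?_
  rw [← norm_pow, ← norm_mul, mul_assoc, ← exp_nat_mul, ← exp_add]
  ring_nf

theorem one_sub_mul_exp_eq_zero_iff (c a : ℂ) : 1 - c * exp a = 0 ↔ c = exp (-a) := by
  rw [sub_eq_zero, eq_comm, exp_neg, mul_eq_one_iff_eq_inv₀ (exp_ne_zero a)]

theorem steinG_eq_zero_iff (ξ w : ℂ) :
    steinG ξ w = 0 ↔ ∃ k : ℤ, w = exp (I * ξ + 2 * π * k) := by
  have hshift : ∀ μ : ℕ, I * ξ - 2 * π * ((μ : ℂ) + 1) = (I * ξ - 2 * π) - 2 * π * μ :=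
    fun μ => by ring
  have hfirst : ∏' ν : ℕ, (1 - w * exp (-I * ξ - 2 * π * ν)) = 0 ↔
      ∃ ν : ℕ, w = exp (I * ξ + 2 * π * ν) := by
    rw [tprod_one_sub_eq_zero_iff_of_summable_norm (summable_norm_mul_exp_sub_two_pi_mul _ _)]
    simp only [one_sub_mul_exp_eq_zero_iff, neg_sub, sub_neg_eq_add, neg_mul, add_comm]
  have hsecond : ∏' μ : ℕ, (1 - w⁻¹ * exp (I * ξ - 2 * π * (μ + 1))) = 0 ↔
      ∃ μ : ℕ, w = exp (I * ξ - 2 * π * (μ + 1)) := by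
    simp only [hshift]
    rw [tprod_one_sub_eq_zero_iff_of_summable_norm (summable_norm_mul_exp_sub_two_pi_mul _ _)]
    simp only [one_sub_mul_exp_eq_zero_iff, inv_eq_iff_eq_inv, ← exp_neg, neg_neg]
  rw [steinG, mul_assoc, mul_eq_zero, mul_eq_zero, or_iff_right (exp_ne_zero _), hfirst,
    hsecond]
  constructor
  · rintro (⟨ν, hν⟩ | ⟨μ, hμ⟩)
    · exact ⟨ν, mod_cast hν⟩
    · exact ⟨Int.negSucc μ, by rw [hμ, Int.cast_negSucc]; push_cast; ring_nf⟩
  · rintro ⟨(ν | μ), hk⟩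
    · exact Or.inl ⟨ν, mod_cast hk⟩
    · exact Or.inr ⟨μ, by rw [hk, Int.cast_negSucc]; push_cast; ring_nf⟩

theorem exists_exp_eq_exp_and_eq_exp_I_mul_iff (ζ w : ℂ) :
    (∃ ζ', exp ζ' = exp ζ ∧ w = exp (I * ζ')) ↔ ∃ k : ℤ, w = exp (I * ζ + 2 * π * k) := by
  simp only [exp_eq_exp_iff_exists_int]
  constructor
  · rintro ⟨_, ⟨k, rfl⟩, rfl⟩
    exact ⟨-k, by push_cast; ring_nf; rw [I_sq]; ring_nf⟩
  · rintro ⟨k, rfl⟩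
    exact ⟨ζ + (-k : ℤ) * (2 * π * I), ⟨-k, rfl⟩, by push_cast; ring_nf; rw [I_sq]; ring_nf⟩

theorem steinG_zero_iff_curve_general (ζ w : ℂ) :
    steinG ζ w = 0 ↔
      ∃ ζ' : ℂ, Complex.exp ζ' = Complex.exp ζ ∧ w = Complex.exp (Complex.I * ζ') := by
  rw [steinG_eq_zero_iff, exists_exp_eq_exp_and_eq_exp_I_mul_iff]

/-- The zero locus of Stein's function on `(ℂ*)²`, parametrized by `z = e^ζ`,
is exactly the image of the curve `Φ(ζ) = (e^ζ, e^{iζ})`, i.e. the divisor `D⁺`. -/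
theorem steinG_zero_iff_curve (ζ w : ℂ) (hw : w ≠ 0) :
    steinG ζ w = 0 ↔
      ∃ ζ' : ℂ, Complex.exp ζ' = Complex.exp ζ ∧ w = Complex.exp (Complex.I * ζ') :=
  steinG_zero_iff_curve_general ζ w
end

section
/- Stein's function satisfies the monodromy relation 𝓛_z F⁺ = w·F⁺: for every ξ ∈ ℂ and every w ∈ ℂ∖{0}, G(ξ + 2πi, w) = w · G(ξ, w). -/
open Complex
open scoped Real

section QPochhammer

variable {𝕜 : Type*} [NormedField 𝕜] [CompleteSpace 𝕜]

/-- The `q`-Pochhammer symbol `(c; q)_∞`. -/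
noncomputable def qPochhammerInf (c q : 𝕜) : 𝕜 :=
  ∏' n : ℕ, (1 - c * q ^ n)

variable {q : 𝕜}

theorem multipliable_one_sub_mul_pow (c : 𝕜) (hq : ‖q‖ < 1) :
    Multipliable fun n : ℕ => 1 - c * q ^ n := by
  simp_rw [sub_eq_add_neg]
  refine multipliable_one_add_of_summable <|
    ((summable_geometric_of_lt_one (norm_nonneg q) hq).mul_left ‖c‖).congr fun n => ?_
  simp

theorem one_sub_mul_qPochhammerInf_mul (c : 𝕜) (hq : ‖q‖ < 1) :
    (1 - c) * qPochhammerInf (c * q) q = qPochhammerInf c q := by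
  have hshift : Multipliable fun n : ℕ => 1 - c * q ^ (n + 1) := by
    simpa only [pow_succ', ← mul_assoc] using multipliable_one_sub_mul_pow (c * q) hq
  rw [qPochhammerInf, qPochhammerInf,
    tprod_eq_zero_mul' (f := fun n : ℕ => 1 - c * q ^ n) hshift, pow_zero, mul_one]
  simp_rw [pow_succ', ← mul_assoc]

noncomputable def thetaProd (q w z : 𝕜) : 𝕜 :=
  qPochhammerInf (w * z⁻¹) q * qPochhammerInf (w⁻¹ * z * q) q

theorem neg_mul_thetaProd_mul {w z : 𝕜} (hq : ‖q‖ < 1) (hq₀ : q ≠ 0) (hz : z ≠ 0)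
    (hw : w ≠ 0) : -(z * q) * thetaProd q w (z * q) = w * thetaProd q w z := by
  have h₁ := one_sub_mul_qPochhammerInf_mul (w * (z * q)⁻¹) hq
  have h₂ := one_sub_mul_qPochhammerInf_mul (w⁻¹ * z * q) hq
  rw [mul_assoc w, show (z * q)⁻¹ * q = z⁻¹ by field_simp] at h₁
  rw [thetaProd, thetaProd, ← h₁, ← h₂]
  field_simp
  ring

end QPochhammer

theorem norm_exp_neg_two_pi_lt_one : ‖exp (-(2 * π))‖ < 1 := by
  rw [norm_exp, Real.exp_lt_one_iff]
  simpa using Real.pi_pos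

theorem steinG_eq_exp_mul_thetaProd (ξ w : ℂ) :
    steinG ξ w = exp (ξ ^ 2 / (4 * π) + ξ / (1 - I)) *
      thetaProd (exp (-(2 * π))) w (exp (I * ξ)) := by
  have h₁ (ν : ℕ) : exp (-I * ξ - 2 * π * ν) = (exp (I * ξ))⁻¹ * exp (-(2 * π)) ^ ν := by
    rw [← exp_neg, ← exp_nat_mul, ← exp_add]
    congr 1
    ring
  have h₂ (μ : ℕ) : exp (I * ξ - 2 * π * (μ + 1)) =
      exp (I * ξ) * exp (-(2 * π)) * exp (-(2 * π)) ^ μ := by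
    rw [← exp_nat_mul, ← exp_add, ← exp_add]
    congr 1
    ring
  rw [steinG]
  simp_rw [h₁, h₂]
  simp only [thetaProd, qPochhammerInf, mul_assoc]

theorem exp_I_mul_add_two_pi_I (ξ : ℂ) :
    exp (I * (ξ + 2 * π * I)) = exp (I * ξ) * exp (-(2 * π)) := by
  rw [← exp_add]
  congr 1
  linear_combination 2 * π * I_sq

theorem exp_steinG_prefactor_add_two_pi_I (ξ : ℂ) :
    exp ((ξ + 2 * π * I) ^ 2 / (4 * π) + (ξ + 2 * π * I) / (1 - I)) =
      -(exp (I * ξ) * exp (-(2 * π))) * exp (ξ ^ 2 / (4 * π) + ξ / (1 - I)) := by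
  have hπ : (π : ℂ) ≠ 0 := ofReal_ne_zero.mpr Real.pi_ne_zero
  have h1I : (1 : ℂ) - I ≠ 0 := by
    intro h
    simpa using congrArg im h
  have hexponent : (ξ + 2 * π * I) ^ 2 / (4 * π) + (ξ + 2 * π * I) / (1 - I) =
      π * I + I * ξ + -(2 * π) + (ξ ^ 2 / (4 * π) + ξ / (1 - I)) := by
    field_simp
    linear_combination (8 * (π : ℂ) ^ 2 - 4 * π ^ 2 * I) * I_sq
  rw [hexponent, exp_add, exp_add, exp_add, exp_pi_mul_I]
  ring

/-- Monodromy relation `𝓛_z F⁺ = w·F⁺`: replacing `ξ = log z` by `ξ + 2πi`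
multiplies Stein's function by `w`. -/
theorem steinG_monodromy (ξ w : ℂ) (hw : w ≠ 0) :
    steinG (ξ + 2 * Real.pi * Complex.I) w = w * steinG ξ w := by
  rw [steinG_eq_exp_mul_thetaProd, steinG_eq_exp_mul_thetaProd, exp_I_mul_add_two_pi_I,
    exp_steinG_prefactor_add_two_pi_I]
  linear_combination exp (ξ ^ 2 / (4 * π) + ξ / (1 - I)) *
    neg_mul_thetaProd_mul norm_exp_neg_two_pi_lt_one (exp_ne_zero _) (exp_ne_zero _) hw
end
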